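/- Let X, A, L be as in the suspicion bound (A finite-valued, L {0,1}-valued, A independent of X conditioned on L=0, and Pr(L=0 | X=x, A=a) > 0 whenever Pr(X=x, A=a) > 0). Then equality I(X;A) = susp(X,A) − susp(X) holds if and only if the distribution of A equals the conditional distribution of A given L=0, i.e. Pr(A=a) = Pr(A=a | L=0) for all a. -/

import Mathlib

open Finset

/-- Probability of an event `E` under the probability mass function `p`
on a finite sample space `Ω`. -/
noncomputable def Pr {Ω : Type*} [Fintype Ω] (p : Ω → ℝ) (E : Set Ω) : ℝ :=
  ∑ ω, E.indicator p ω

/-- Conditional probability `Pr(E | F)`. -/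
noncomputable def cPr {Ω : Type*} [Fintype Ω] (p : Ω → ℝ) (E F : Set Ω) : ℝ :=
  Pr p (E ∩ F) / Pr p F

/-- The suspicion given a random variable `Yv`:
`susp(Y) = Σ_y Pr(Y=y) · (−log₂ Pr(L=0 | Y=y))`. -/
noncomputable def susp {Ω Y : Type*} [Fintype Ω] [Fintype Y] (p : Ω → ℝ)
    (L : Ω → Bool) (Yv : Ω → Y) : ℝ :=
  ∑ y, Pr p {ω | Yv ω = y} * (-Real.logb 2 (cPr p {ω | L ω = false} {ω | Yv ω = y}))

/-- Mutual information (base 2) between two finite-valued random variables. -/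
noncomputable def mutInfo {Ω S T : Type*} [Fintype Ω] [Fintype S] [Fintype T]
    (p : Ω → ℝ) (Xv : Ω → S) (Av : Ω → T) : ℝ :=
  ∑ x, ∑ a, Pr p {ω | Xv ω = x ∧ Av ω = a} *
    Real.logb 2 (Pr p {ω | Xv ω = x ∧ Av ω = a} /
      (Pr p {ω | Xv ω = x} * Pr p {ω | Av ω = a}))

/-- Conditional Shannon entropy (base 2) `H(A | X)`. -/
noncomputable def condEntropy {Ω S T : Type*} [Fintype Ω] [Fintype S] [Fintype T]
    (p : Ω → ℝ) (Av : Ω → T) (Xv : Ω → S) : ℝ :=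
  ∑ x, ∑ a, Pr p {ω | Xv ω = x ∧ Av ω = a} *
    Real.logb 2 (Pr p {ω | Xv ω = x} / Pr p {ω | Xv ω = x ∧ Av ω = a})

/-- Conditional mutual information (base 2) `I(X; A | Z)`. -/
noncomputable def condMutInfo {Ω S T U : Type*} [Fintype Ω] [Fintype S] [Fintype T] [Fintype U]
    (p : Ω → ℝ) (Xv : Ω → S) (Av : Ω → T) (Zv : Ω → U) : ℝ :=
  ∑ z, ∑ x, ∑ a, Pr p {ω | Xv ω = x ∧ Av ω = a ∧ Zv ω = z} *
    Real.logb 2 ((Pr p {ω | Xv ω = x ∧ Av ω = a ∧ Zv ω = z} * Pr p {ω | Zv ω = z}) /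
      (Pr p {ω | Xv ω = x ∧ Zv ω = z} * Pr p {ω | Av ω = a ∧ Zv ω = z}))

/-!
Conditional independence of `A` and `X` given `L = 0` factors `Pr(L=0 | X, A)` as
`Pr(L=0 | X) · Pr(A | L=0) / Pr(A | X)`. Hence the log-ratios telescope, and
`susp(X,A) − susp(X) − I(X;A)` is the Kullback–Leibler divergence of the law of `A` from its
law given `L = 0`. By Gibbs' inequality this divergence vanishes exactly when the two laws agree.
-/

open InformationTheory

theorem sum_mul_log_div_eq_zero_iff {ι : Type*} [Fintype ι] {q r : ι → ℝ}
    (hq : ∀ i, 0 ≤ q i) (hr : ∀ i, 0 ≤ r i) (hqr : ∀ i, r i = 0 → q i = 0)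
    (hsum : ∑ i, q i = ∑ i, r i) :
    ∑ i, q i * Real.log (q i / r i) = 0 ↔ ∀ i, q i = r i := by
  have hterm : ∀ i, q i * Real.log (q i / r i) = r i * klFun (q i / r i) + (q i - r i) := by
    intro i
    rcases (hr i).eq_or_lt with h | h
    · simp [← h, hqr i h.symm]
    · rw [klFun_apply]
      field_simp
      ring
  have hkl : ∀ i ∈ univ, 0 ≤ r i * klFun (q i / r i) := fun i _ =>
    mul_nonneg (hr i) (klFun_nonneg (div_nonneg (hq i) (hr i)))
  rw [sum_congr rfl fun i _ => hterm i, sum_add_distrib, sum_sub_distrib, hsum, sub_self,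
    add_zero, sum_eq_zero_iff_of_nonneg hkl]
  refine forall_congr' fun i => ?_
  rcases (hr i).eq_or_lt with h | h
  · simp [← h, hqr i h.symm]
  · rw [mul_eq_zero, or_iff_right h.ne', klFun_eq_zero_iff (div_nonneg (hq i) h.le),
      div_eq_one_iff_eq h.ne']
    simp

theorem sum_mul_logb_div_eq_zero_iff {ι : Type*} [Fintype ι] {b : ℝ} (hb : 1 < b)
    {q r : ι → ℝ}
    (hq : ∀ i, 0 ≤ q i) (hr : ∀ i, 0 ≤ r i) (hqr : ∀ i, r i = 0 → q i = 0)
    (hsum : ∑ i, q i = ∑ i, r i) :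
    ∑ i, q i * Real.logb b (q i / r i) = 0 ↔ ∀ i, q i = r i := by
  simp_rw [Real.logb, mul_div_assoc', ← sum_div, div_eq_zero_iff,
    or_iff_left (Real.log_pos hb).ne']
  exact sum_mul_log_div_eq_zero_iff hq hr hqr hsum

section Suspicion

variable {Ω S T : Type*} [Fintype Ω] {p : Ω → ℝ}

lemma Pr_nonneg (hp : ∀ ω, 0 ≤ p ω) (E : Set Ω) : 0 ≤ Pr p E :=
  sum_nonneg fun ω _ => Set.indicator_nonneg (fun ω _ => hp ω) ω

lemma Pr_mono (hp : ∀ ω, 0 ≤ p ω) {E F : Set Ω} (h : E ⊆ F) : Pr p E ≤ Pr p F :=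
  sum_le_sum fun ω _ => Set.indicator_le_indicator_of_subset h hp ω

lemma Pr_univ : Pr p Set.univ = ∑ ω, p ω := by
  simp [Pr]

lemma sum_Pr_inter_fiber [Fintype T] (E : Set Ω) (f : Ω → T) :
    ∑ t, Pr p (E ∩ {ω | f ω = t}) = Pr p E := by
  classical
  unfold Pr
  rw [sum_comm]
  refine sum_congr rfl fun ω _ => ?_
  by_cases h : ω ∈ E <;> simp [Set.indicator_apply, h]

lemma sum_Pr_and_left [Fintype S] (X : Ω → S) (A : Ω → T) (a : T) :
    ∑ x, Pr p {ω | X ω = x ∧ A ω = a} = Pr p {ω | A ω = a} := by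
  rw [← sum_Pr_inter_fiber {ω | A ω = a} X]
  exact sum_congr rfl fun x _ => congrArg (Pr p) (Set.inter_comm _ _)

lemma Pr_inter_pos_of_cPr_pos (hp : ∀ ω, 0 ≤ p ω) {E F : Set Ω} (h : 0 < cPr p E F) :
    0 < Pr p (E ∩ F) :=
  ((div_pos_iff.mp h).resolve_right fun h' => (Pr_nonneg hp F).not_gt h'.2).1

lemma susp_pair_eq [Fintype S] [Fintype T] (L : Ω → Bool) (X : Ω → S) (A : Ω → T) :
    susp p L (fun ω => (X ω, A ω)) = ∑ x, ∑ a, Pr p {ω | X ω = x ∧ A ω = a} *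
      -Real.logb 2 (cPr p {ω | L ω = false} {ω | X ω = x ∧ A ω = a}) := by
  simp only [susp, Fintype.sum_prod_type, Prod.mk.injEq]

lemma susp_eq_sum_fiber [Fintype S] [Fintype T] (L : Ω → Bool) (X : Ω → S) (A : Ω → T) :
    susp p L X = ∑ x, ∑ a, Pr p {ω | X ω = x ∧ A ω = a} *
      -Real.logb 2 (cPr p {ω | L ω = false} {ω | X ω = x}) := by
  simp only [susp, ← sum_mul]
  exact sum_congr rfl fun x _ => by rw [← sum_Pr_inter_fiber {ω | X ω = x} A]; rfl

lemma mul_logb_cPr_sub_eq_of_condIndep (hp : ∀ ω, 0 ≤ p ω) {E F G : Set Ω}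
    (hindep : 0 < Pr p (F ∩ E) → cPr p G (F ∩ E) = cPr p G E)
    (hpos : 0 < Pr p (F ∩ G) → 0 < cPr p E (F ∩ G)) :
    Pr p (F ∩ G) * -Real.logb 2 (cPr p E (F ∩ G)) - Pr p (F ∩ G) * -Real.logb 2 (cPr p E F)
      - Pr p (F ∩ G) * Real.logb 2 (Pr p (F ∩ G) / (Pr p F * Pr p G))
      = Pr p (F ∩ G) * Real.logb 2 (Pr p G / cPr p G E) := by
  rcases (Pr_nonneg hp (F ∩ G)).eq_or_lt with hq | hq
  · simp [← hq]
  have hs := Pr_inter_pos_of_cPr_pos hp (hpos hq)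
  have hF : 0 < Pr p F := hq.trans_le (Pr_mono hp Set.inter_subset_left)
  have hG : 0 < Pr p G := hq.trans_le (Pr_mono hp Set.inter_subset_right)
  have hFE : 0 < Pr p (F ∩ E) := hs.trans_le (Pr_mono hp fun ω h => ⟨h.2.1, h.1⟩)
  have hGE : 0 < Pr p (G ∩ E) := hs.trans_le (Pr_mono hp fun ω h => ⟨h.2.2, h.1⟩)
  have hE : 0 < Pr p E := hGE.trans_le (Pr_mono hp Set.inter_subset_right)
  have hfactor : Pr p (E ∩ (F ∩ G)) * Pr p E = Pr p (E ∩ F) * Pr p (G ∩ E) := by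
    have h := hindep hFE
    rw [cPr, cPr, div_eq_div_iff hFE.ne' hE.ne'] at h
    simp only [Set.inter_comm, Set.inter_left_comm] at h ⊢
    linarith
  have hEF : 0 < Pr p (E ∩ F) := hs.trans_le (Pr_mono hp fun ω h => ⟨h.1, h.2.1⟩)
  have hu : cPr p E F ≠ 0 := (div_pos hEF hF).ne'
  have hv : cPr p E (F ∩ G) ≠ 0 := (hpos hq).ne'
  have hw : Pr p (F ∩ G) / (Pr p F * Pr p G) ≠ 0 := (div_pos hq (mul_pos hF hG)).ne'
  calc _ = Pr p (F ∩ G) * (Real.logb 2 (cPr p E F) - Real.logb 2 (cPr p E (F ∩ G))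
          - Real.logb 2 (Pr p (F ∩ G) / (Pr p F * Pr p G))) := by ring
    _ = Pr p (F ∩ G) * Real.logb 2
          (cPr p E F / cPr p E (F ∩ G) / (Pr p (F ∩ G) / (Pr p F * Pr p G))) := by
        rw [Real.logb_div (div_ne_zero hu hv) hw, Real.logb_div hu hv]
    _ = _ := by
        congr 2
        simp only [cPr]
        field_simp
        exact hfactor.symm

lemma susp_sub_susp_sub_mutInfo [Fintype S] [Fintype T] (hp : ∀ ω, 0 ≤ p ω)
    (X : Ω → S) (A : Ω → T) (L : Ω → Bool)
    (hindep : ∀ (a : T) (x : S), 0 < Pr p {ω | X ω = x ∧ L ω = false} →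
      cPr p {ω | A ω = a} {ω | X ω = x ∧ L ω = false} =
        cPr p {ω | A ω = a} {ω | L ω = false})
    (hpos : ∀ (x : S) (a : T), 0 < Pr p {ω | X ω = x ∧ A ω = a} →
      0 < cPr p {ω | L ω = false} {ω | X ω = x ∧ A ω = a}) :
    susp p L (fun ω => (X ω, A ω)) - susp p L X - mutInfo p X A =
      ∑ a, Pr p {ω | A ω = a} *
        Real.logb 2 (Pr p {ω | A ω = a} / cPr p {ω | A ω = a} {ω | L ω = false}) := by
  rw [susp_pair_eq, susp_eq_sum_fiber L X A, mutInfo]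
  simp only [← sum_sub_distrib]
  rw [sum_comm]
  refine sum_congr rfl fun a _ => ?_
  calc _ = ∑ x, Pr p {ω | X ω = x ∧ A ω = a} *
          Real.logb 2 (Pr p {ω | A ω = a} / cPr p {ω | A ω = a} {ω | L ω = false}) :=
        sum_congr rfl fun x _ => mul_logb_cPr_sub_eq_of_condIndep (E := {ω | L ω = false})
          (F := {ω | X ω = x}) (G := {ω | A ω = a}) hp (hindep a x) (hpos x a)
    _ = _ := by rw [← sum_mul, sum_Pr_and_left]

lemma Pr_inter_pos_of_Pr_pos [Fintype S] (hp : ∀ ω, 0 ≤ p ω) (X : Ω → S) (A : Ω → T)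
    (L : Ω → Bool) (hpos : ∀ (x : S) (a : T), 0 < Pr p {ω | X ω = x ∧ A ω = a} →
      0 < cPr p {ω | L ω = false} {ω | X ω = x ∧ A ω = a})
    {a : T} (ha : 0 < Pr p {ω | A ω = a}) :
    0 < Pr p ({ω | A ω = a} ∩ {ω | L ω = false}) := by
  obtain ⟨x, -, hx⟩ : ∃ x ∈ univ, 0 < Pr p {ω | X ω = x ∧ A ω = a} :=
    exists_lt_of_sum_lt (by rwa [sum_const_zero, sum_Pr_and_left])
  exact (Pr_inter_pos_of_cPr_pos hp (hpos x a hx)).trans_le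
    (Pr_mono hp fun ω h => ⟨h.2.2, h.1⟩)

end Suspicion

/-- equality `I(X;A) = susp(X,A) − susp(X)` holds iff the
distribution of `A` equals the conditional distribution of `A` given `L = 0`. -/
theorem info_eq_susp_increase_iff {Ω S T : Type*} [Fintype Ω] [Fintype S] [Fintype T]
    (p : Ω → ℝ) (hp : ∀ ω, 0 ≤ p ω) (hp1 : ∑ ω, p ω = 1)
    (X : Ω → S) (A : Ω → T) (L : Ω → Bool)
    (hindep : ∀ (a : T) (x : S), 0 < Pr p {ω | X ω = x ∧ L ω = false} →
      cPr p {ω | A ω = a} {ω | X ω = x ∧ L ω = false} =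
        cPr p {ω | A ω = a} {ω | L ω = false})
    (hpos : ∀ (x : S) (a : T), 0 < Pr p {ω | X ω = x ∧ A ω = a} →
      0 < cPr p {ω | L ω = false} {ω | X ω = x ∧ A ω = a}) :
    mutInfo p X A = susp p L (fun ω => (X ω, A ω)) - susp p L X ↔
      ∀ a : T, Pr p {ω | A ω = a} = cPr p {ω | A ω = a} {ω | L ω = false} := by
  have hA : ∑ a, Pr p {ω | A ω = a} = 1 := by
    simpa [Pr_univ, hp1] using sum_Pr_inter_fiber (p := p) Set.univ A
  have hAL := fun a => Pr_inter_pos_of_Pr_pos (a := a) hp X A L hpos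
  have hL : 0 < Pr p {ω | L ω = false} := by
    obtain ⟨a, -, ha⟩ : ∃ a ∈ univ, 0 < Pr p {ω | A ω = a} :=
      exists_lt_of_sum_lt (by rw [sum_const_zero, hA]; exact one_pos)
    exact (hAL a ha).trans_le (Pr_mono hp Set.inter_subset_right)
  have hAL_sum : ∑ a, cPr p {ω | A ω = a} {ω | L ω = false} = 1 := by
    simp_rw [cPr, ← sum_div, Set.inter_comm _ {ω | L ω = false}, sum_Pr_inter_fiber,
      div_self hL.ne']
  rw [eq_comm, ← sub_eq_zero, susp_sub_susp_sub_mutInfo hp X A L hindep hpos]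
  refine sum_mul_logb_div_eq_zero_iff one_lt_two (fun _ => Pr_nonneg hp _)
    (fun _ => div_nonneg (Pr_nonneg hp _) (Pr_nonneg hp _)) (fun a hr => ?_)
    (hA.trans hAL_sum.symm)
  by_contra hq
  exact (div_pos (hAL a ((Pr_nonneg hp _).lt_of_ne' hq)) hL).ne' hr
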